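/- arXiv:2007.03984 — 3 statements merged into one kernel-verified Lean document; each statement's English description precedes it below -/
import Mathlib

section
/- There is an absolute constant K such that for all integers m, n ≥ 2, the number of proper pairs of oriented segments (→AB, →CD) in 𝒢_{m,n} for which the function f_{→AB} ∧ f_{→CD} has no true points on the boundary of 𝒢_{m,n} is at most K·m²n²(m+n)². -/
open scoped Real

noncomputable section

/-- Integer 2×2 determinant of two planar vectors. -/
def detZ (v w : ℤ × ℤ) : ℤ := v.1 * w.2 - v.2 * w.1

/-- Real 2×2 determinant of two planar vectors. -/
def detR (v w : ℝ × ℝ) : ℝ := v.1 * w.2 - v.2 * w.1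

/-- The grid 𝒢_{m,n} = {0,…,m−1} × {0,…,n−1} of integer points. -/
def Grid (m n : ℕ) : Set (ℤ × ℤ) :=
  {p | 0 ≤ p.1 ∧ p.1 < (m : ℤ) ∧ 0 ≤ p.2 ∧ p.2 < (n : ℤ)}

/-- The boundary B(𝒢_{m,n}) of the grid. -/
def GridBoundary (m n : ℕ) : Set (ℤ × ℤ) :=
  {p | p ∈ Grid m n ∧ (p.1 = 0 ∨ p.1 = (m : ℤ) - 1 ∨ p.2 = 0 ∨ p.2 = (n : ℤ) - 1)}

/-- The segment AB is prime: A, B are the only integer points on it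
(equivalently, the coordinates of B − A are coprime). -/
def PrimeSeg (A B : ℤ × ℤ) : Prop := Int.gcd (B.1 - A.1) (B.2 - A.2) = 1

/-- f_{→AB}(X) = 1 : X on the line through A, B and strictly closer to A than to B,
or the triangle →ABX is counterclockwise. -/
def SegTrue (A B X : ℤ × ℤ) : Prop :=
  (detZ (B - A) (X - A) = 0 ∧
    (X.1 - A.1) ^ 2 + (X.2 - A.2) ^ 2 < (X.1 - B.1) ^ 2 + (X.2 - B.2) ^ 2) ∨
  0 < detZ (B - A) (X - A)

/-- The pair of oriented segments (→AB, →CD) with endpoints in 𝒢_{m,n} is proper. -/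
def ProperPair (m n : ℕ) (A B C D : ℤ × ℤ) : Prop :=
  A ∈ Grid m n ∧ B ∈ Grid m n ∧ C ∈ Grid m n ∧ D ∈ Grid m n ∧
  PrimeSeg A B ∧ PrimeSeg C D ∧
  SegTrue C D A ∧ SegTrue C D B ∧ SegTrue A B C ∧ SegTrue A B D

/-- A, B, C, D (in this cyclic order) are the vertices of a (strictly) convex
quadrilateral with sides AB, BC, CD, DA. -/
def QuadConv (A B C D : ℤ × ℤ) : Prop :=
  (0 < detZ (B - A) (C - B) ∧ 0 < detZ (C - B) (D - C) ∧
    0 < detZ (D - C) (A - D) ∧ 0 < detZ (A - D) (B - A)) ∨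
  (detZ (B - A) (C - B) < 0 ∧ detZ (C - B) (D - C) < 0 ∧
    detZ (D - C) (A - D) < 0 ∧ detZ (A - D) (B - A) < 0)

/-- The segments AB and CD are in convex position: A, B, C, D are the vertices of a
convex quadrilateral in which AB and CD are opposite sides. -/
def ConvexPos (A B C D : ℤ × ℤ) : Prop := QuadConv A B C D ∨ QuadConv A B D C

/-- Real-plane version of `QuadConv`. -/
def QuadConvR (A B C D : ℝ × ℝ) : Prop :=
  (0 < detR (B - A) (C - B) ∧ 0 < detR (C - B) (D - C) ∧
    0 < detR (D - C) (A - D) ∧ 0 < detR (A - D) (B - A)) ∨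
  (detR (B - A) (C - B) < 0 ∧ detR (C - B) (D - C) < 0 ∧
    detR (D - C) (A - D) < 0 ∧ detR (A - D) (B - A) < 0)

/-- Real-plane version of `ConvexPos`. -/
def ConvexPosR (A B C D : ℝ × ℝ) : Prop := QuadConvR A B C D ∨ QuadConvR A B D C

/-- Embedding of integer points into the real plane. -/
def ptR (p : ℤ × ℤ) : ℝ × ℝ := ((p.1 : ℝ), (p.2 : ℝ))

/-- Embedding of integer points into the Euclidean plane. -/
def ptE (p : ℤ × ℤ) : EuclideanSpace ℝ (Fin 2) := WithLp.toLp 2 ![(p.1 : ℝ), (p.2 : ℝ)]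

/-- A threshold function on 𝒢_{m,n}, identified with its set T of true points:
the convex hulls of true and false points are disjoint. -/
def IsThresholdSet (m n : ℕ) (T : Set (ℤ × ℤ)) : Prop :=
  T ⊆ Grid m n ∧
  Disjoint (convexHull ℝ (ptR '' T)) (convexHull ℝ (ptR '' (Grid m n \ T)))

/-- A 2-threshold function on 𝒢_{m,n}, identified with its set of true points. -/
def IsTwoThresholdSet (m n : ℕ) (T : Set (ℤ × ℤ)) : Prop :=
  ∃ T₁ T₂ : Set (ℤ × ℤ), IsThresholdSet m n T₁ ∧ IsThresholdSet m n T₂ ∧ T = T₁ ∩ T₂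

/-- t₂(m,n): the number of 2-threshold functions on 𝒢_{m,n}. -/
def t2 (m n : ℕ) : ℕ := {T : Set (ℤ × ℤ) | IsTwoThresholdSet m n T}.ncard

/-- The set of proper (unordered) pairs of oriented segments in 𝒢_{m,n}. -/
def ProperPairs (m n : ℕ) : Set (Sym2 ((ℤ × ℤ) × (ℤ × ℤ))) :=
  {z | ∃ A B C D : ℤ × ℤ, z = s((A, B), (C, D)) ∧ ProperPair m n A B C D}

/-- q(m,n): the number of proper pairs of oriented segments in 𝒢_{m,n}. -/
def qcount (m n : ℕ) : ℕ := (ProperPairs m n).ncard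

/-- The set of unordered pairs of (non-oriented) prime segments with endpoints in
𝒢_{m,n} that are in convex position. -/
def ConvexPrimePairs (m n : ℕ) : Set (Sym2 (Sym2 (ℤ × ℤ))) :=
  {z | ∃ A B C D : ℤ × ℤ, z = s(s(A, B), s(C, D)) ∧
    A ∈ Grid m n ∧ B ∈ Grid m n ∧ C ∈ Grid m n ∧ D ∈ Grid m n ∧
    PrimeSeg A B ∧ PrimeSeg C D ∧ ConvexPos A B C D}

/-- p(m,n): the number of unordered pairs of prime segments in convex position with
endpoints in 𝒢_{m,n}. -/
def pcount (m n : ℕ) : ℕ := (ConvexPrimePairs m n).ncard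

/-- The axis-aligned bounding box of {A,B,C,D} is the rectangle [0,u]×[0,v]. -/
def InBBox (u v : ℕ) (A B C D : ℤ × ℤ) : Prop :=
  min (min A.1 B.1) (min C.1 D.1) = 0 ∧
  max (max A.1 B.1) (max C.1 D.1) = (u : ℤ) ∧
  min (min A.2 B.2) (min C.2 D.2) = 0 ∧
  max (max A.2 B.2) (max C.2 D.2) = (v : ℤ)

/-- The pair {AB, CD} of prime segments is in convex position with bounding box
ℛ_{u,v} = [0,u]×[0,v]. -/
def ZPair (u v : ℕ) (A B C D : ℤ × ℤ) : Prop :=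
  PrimeSeg A B ∧ PrimeSeg C D ∧ ConvexPos A B C D ∧ InBBox u v A B C D

/-- Z(u,v): pairs of prime segments in convex position with bounding box ℛ_{u,v}. -/
def Zset (u v : ℕ) : Set (Sym2 (Sym2 (ℤ × ℤ))) :=
  {z | ∃ A B C D : ℤ × ℤ, z = s(s(A, B), s(C, D)) ∧ ZPair u v A B C D}

/-- P is a corner (vertex) of the rectangle ℛ_{u,v} = [0,u]×[0,v]. -/
def RectCorner (u v : ℕ) (P : ℤ × ℤ) : Prop :=
  (P.1 = 0 ∨ P.1 = (u : ℤ)) ∧ (P.2 = 0 ∨ P.2 = (v : ℤ))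

/-- The number of points among A, B, C, D that are corners of ℛ_{u,v}. -/
def cornerCount (u v : ℕ) (A B C D : ℤ × ℤ) : ℕ :=
  {P : ℤ × ℤ | P ∈ ({A, B, C, D} : Set (ℤ × ℤ)) ∧ RectCorner u v P}.ncard

/-- Z_i(u,v): the pairs in Z(u,v) with exactly i endpoints at corners of ℛ_{u,v}. -/
def Zi (i u v : ℕ) : Set (Sym2 (Sym2 (ℤ × ℤ))) :=
  {z | ∃ A B C D : ℤ × ℤ, z = s(s(A, B), s(C, D)) ∧ ZPair u v A B C D ∧
    cornerCount u v A B C D = i}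

/-- Z₂ᵃ(u,v): exactly two corner endpoints, lying at adjacent corners of ℛ_{u,v}. -/
def Z2a (u v : ℕ) : Set (Sym2 (Sym2 (ℤ × ℤ))) :=
  {z | ∃ A B C D : ℤ × ℤ, z = s(s(A, B), s(C, D)) ∧ ZPair u v A B C D ∧
    cornerCount u v A B C D = 2 ∧
    ∃ X Y : ℤ × ℤ, X ∈ ({A, B, C, D} : Set (ℤ × ℤ)) ∧ Y ∈ ({A, B, C, D} : Set (ℤ × ℤ)) ∧
      X ≠ Y ∧ RectCorner u v X ∧ RectCorner u v Y ∧ (X.1 = Y.1 ∨ X.2 = Y.2)}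

/-- Z₂ᵇ(u,v): exactly two corner endpoints, at opposite corners of ℛ_{u,v},
both on the same segment of the pair. -/
def Z2b (u v : ℕ) : Set (Sym2 (Sym2 (ℤ × ℤ))) :=
  {z | ∃ A B C D : ℤ × ℤ, z = s(s(A, B), s(C, D)) ∧ ZPair u v A B C D ∧
    cornerCount u v A B C D = 2 ∧
    RectCorner u v A ∧ RectCorner u v B ∧ A.1 ≠ B.1 ∧ A.2 ≠ B.2}

/-- Z₂ᶜ(u,v): exactly two corner endpoints, at opposite corners of ℛ_{u,v},
belonging to different segments of the pair. -/
def Z2c (u v : ℕ) : Set (Sym2 (Sym2 (ℤ × ℤ))) :=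
  {z | ∃ A B C D : ℤ × ℤ, z = s(s(A, B), s(C, D)) ∧ ZPair u v A B C D ∧
    cornerCount u v A B C D = 2 ∧
    RectCorner u v A ∧ RectCorner u v C ∧ A.1 ≠ C.1 ∧ A.2 ≠ C.2}

/-- Z₁ᵃ(u,v): exactly one corner endpoint A; the other endpoint B of the segment
containing A is an interior point of ℛ_{u,v}. -/
def Z1a (u v : ℕ) : Set (Sym2 (Sym2 (ℤ × ℤ))) :=
  {z | ∃ A B C D : ℤ × ℤ, z = s(s(A, B), s(C, D)) ∧ ZPair u v A B C D ∧
    cornerCount u v A B C D = 1 ∧ RectCorner u v A ∧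
    0 < B.1 ∧ B.1 < (u : ℤ) ∧ 0 < B.2 ∧ B.2 < (v : ℤ)}

/-- Z₁ᵇ(u,v): exactly one corner endpoint A; the other endpoint B of the segment
containing A lies on the boundary of ℛ_{u,v}. -/
def Z1b (u v : ℕ) : Set (Sym2 (Sym2 (ℤ × ℤ))) :=
  {z | ∃ A B C D : ℤ × ℤ, z = s(s(A, B), s(C, D)) ∧ ZPair u v A B C D ∧
    cornerCount u v A B C D = 1 ∧ RectCorner u v A ∧
    (B.1 = 0 ∨ B.1 = (u : ℤ) ∨ B.2 = 0 ∨ B.2 = (v : ℤ))}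

end

/-!
Write `u = B - A`, `v = D - C`, `f = det(u, · - A)` and `g = det(v, · - C)`, and swap the two
segments if necessary so that `det(u, v) ≥ 0`. The endpoints `A` and `C` are true points of
`f_{→AB} ∧ f_{→CD}`, hence interior points of the grid.

Up to quarter turns of the grid, `u₁ > 0 ≤ u₂`, and then `v₁ < 0`, since otherwise a point of the
top edge is a common true point. Walking along the left or the bottom edge, `f` passes from `≤ 0`
to `> 0` in steps of size at most `‖u‖∞`, so some boundary point `P` has `0 < f(P) ≤ ‖u‖∞`. If a
grid point `Q` with `g(Q) ≥ 0` had `f(Q) > ‖u‖∞`, then `g(P) ≤ 0 ≤ g(Q)` and `f(P) < f(Q)`, and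
Cramer's rule `det(u, v) • w = det(w, v) • u + det(u, w) • v` for `w = P - Q` would push `P`
strictly to the right of or above `Q`, which is impossible on the left or bottom edge.

So `C` and `D` lie in the strip `0 ≤ f ≤ ‖u‖∞`, which meets every row (or every column) of the grid
in at most two points, of different parity. This leaves at most `(mn)² (2(m + n))²` pairs.
-/

open Finset

theorem detZ_sub_right (u X Y : ℤ × ℤ) : detZ u (X - Y) = detZ u X - detZ u Y := by
  simp only [detZ, Prod.fst_sub, Prod.snd_sub]; ring

theorem detZ_self (u : ℤ × ℤ) : detZ u u = 0 := by
  simp only [detZ]; ring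

theorem detZ_mul_fst (u v w : ℤ × ℤ) : detZ u v * w.1 = detZ w v * u.1 + detZ u w * v.1 := by
  simp only [detZ]; ring

theorem fst_pos_of_detZ {u v w : ℤ × ℤ} (hu : 0 ≤ u.1) (hv : v.1 < 0) (huv : 0 ≤ detZ u v)
    (huw : detZ u w < 0) (hvw : detZ v w ≤ 0) : 0 < w.1 := by
  have hwv : 0 ≤ detZ w v := by simp only [detZ] at hvw ⊢; linarith
  have : 0 < detZ u v * w.1 := by
    rw [detZ_mul_fst]; nlinarith [mul_nonneg hwv hu, mul_pos_of_neg_of_neg huw hv]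
  exact pos_of_mul_pos_right this huv

theorem exists_add_mul_mem_Ioc {a s L : ℤ} (hs : 0 < s) (ha : a ≤ 0) (hL : 0 < a + s * L) :
    ∃ j ∈ Set.Icc 0 L, a + s * j ∈ Set.Ioc 0 s := by
  have hdiv := Int.ediv_mul_le (-a) hs.ne'
  have hlt := Int.lt_ediv_add_one_mul_self (-a) hs
  refine ⟨-a / s + 1, ⟨by have := Int.ediv_nonneg (neg_nonneg.2 ha) hs.le; omega, ?_⟩, ?_, ?_⟩
  · by_contra! h
    nlinarith
  · nlinarith
  · nlinarith

theorem mem_grid_sdiff_gridBoundary {m n : ℕ} {X : ℤ × ℤ} :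
    X ∈ Grid m n \ GridBoundary m n ↔ 1 ≤ X.1 ∧ X.1 ≤ m - 2 ∧ 1 ≤ X.2 ∧ X.2 ≤ n - 2 := by
  simp only [GridBoundary, Grid, Set.mem_sdiff, Set.mem_ofPred_eq]; omega

def gridRot (m : ℕ) (X : ℤ × ℤ) : ℤ × ℤ := (X.2, m - 1 - X.1)

def vecRot (u : ℤ × ℤ) : ℤ × ℤ := (u.2, -u.1)

section Rotation

variable {m n : ℕ} {X : ℤ × ℤ}

@[simp] theorem detZ_vecRot (u w : ℤ × ℤ) : detZ (vecRot u) (vecRot w) = detZ u w := by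
  simp only [detZ, vecRot]; ring

@[simp] theorem gridRot_sub_gridRot (m : ℕ) (X Y : ℤ × ℤ) :
    gridRot m X - gridRot m Y = vecRot (X - Y) := by
  ext <;> simp [gridRot, vecRot]

@[simp] theorem max_abs_vecRot (u : ℤ × ℤ) :
    max |(vecRot u).1| |(vecRot u).2| = max |u.1| |u.2| := by
  simp [vecRot, max_comm]

theorem gridRot_surjective (m : ℕ) : Function.Surjective (gridRot m) :=
  fun Y => ⟨(m - 1 - Y.2, Y.1), by ext <;> simp [gridRot]⟩

@[simp] theorem gridRot_mem_grid : gridRot m X ∈ Grid n m ↔ X ∈ Grid m n := by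
  simp only [gridRot, Grid, Set.mem_ofPred_eq]; omega

@[simp] theorem gridRot_mem_gridBoundary :
    gridRot m X ∈ GridBoundary n m ↔ X ∈ GridBoundary m n := by
  simp only [gridRot, GridBoundary, Grid, Set.mem_ofPred_eq]; omega

end Rotation

theorem snd_pos_of_detZ {u v w : ℤ × ℤ} (hu : 0 ≤ u.2) (hv : v.2 < 0) (huv : 0 ≤ detZ u v)
    (huw : detZ u w < 0) (hvw : detZ v w ≤ 0) : 0 < w.2 :=
  fst_pos_of_detZ (u := vecRot u) (v := vecRot v) (w := vecRot w) hu hv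
    (by rwa [detZ_vecRot]) (by rwa [detZ_vecRot]) (by rwa [detZ_vecRot])

/-- What the argument retains of a proper pair `(→AB, →CD)`, with `u = B - A` and `v = D - C`,
for which `f_{→AB} ∧ f_{→CD}` has no true boundary point and `det(u, v) ≥ 0`. -/
structure BoundaryFreeConfig (m n : ℕ) (A u C v : ℤ × ℤ) : Prop where
  mem_A : A ∈ Grid m n \ GridBoundary m n
  mem_C : C ∈ Grid m n \ GridBoundary m n
  ne_zero : v ≠ 0
  detZ_nonneg : 0 ≤ detZ u v
  detZ_sub_nonneg : 0 ≤ detZ v (A - C)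
  boundary : ∀ X ∈ GridBoundary m n, detZ u (X - A) ≤ 0 ∨ detZ v (X - C) ≤ 0

namespace BoundaryFreeConfig

variable {m n : ℕ} {A u C v Q : ℤ × ℤ}

theorem rotate (h : BoundaryFreeConfig m n A u C v) :
    BoundaryFreeConfig n m (gridRot m A) (vecRot u) (gridRot m C) (vecRot v) where
  mem_A := by simpa using h.mem_A
  mem_C := by simpa using h.mem_C
  ne_zero := by
    have := h.ne_zero
    contrapose! this
    ext <;> simp_all [vecRot, Prod.ext_iff]
  detZ_nonneg := by simpa using h.detZ_nonneg
  detZ_sub_nonneg := by simpa using h.detZ_sub_nonneg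
  boundary := by
    intro Y hY
    obtain ⟨X, rfl⟩ := gridRot_surjective m Y
    simpa using h.boundary X (by simpa using hY)

theorem v_fst_neg (h : BoundaryFreeConfig m n A u C v) (hu1 : 0 < u.1) (hu2 : 0 ≤ u.2) :
    v.1 < 0 := by
  obtain ⟨hA1, hA2, hA3, hA4⟩ := mem_grid_sdiff_gridBoundary.1 h.mem_A
  have hf : ∀ x : ℤ, detZ u ((x, (n : ℤ) - 1) - A) = u.1 * (n - 1 - A.2) + u.2 * (A.1 - x) := by
    intro x; simp only [detZ, Prod.fst_sub, Prod.snd_sub]; ring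
  have hg : ∀ x : ℤ, detZ v ((x, (n : ℤ) - 1) - C)
      = detZ v (A - C) + v.1 * (n - 1 - A.2) + v.2 * (A.1 - x) := by
    intro x; simp only [detZ, Prod.fst_sub, Prod.snd_sub]; ring
  have htop : ∀ x : ℤ, 0 ≤ x → x ≤ A.1 → (x, (n : ℤ) - 1) ∈ GridBoundary m n := by
    intro x hx hxA
    simp [GridBoundary, Grid]; omega
  by_contra! hv1
  -- the top boundary point above `A` is a common true point unless `v₁ = 0 = g(A)`,
  -- and then the one to its left is
  have hv1' : v.1 = 0 ∧ detZ v (A - C) = 0 := by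
    rcases h.boundary _ (htop A.1 (by omega) le_rfl) with h' | h'
    · rw [hf] at h'; nlinarith
    · rw [hg] at h'
      have := h.detZ_sub_nonneg
      constructor <;> nlinarith
  have hv2 : 0 < v.2 := by
    have ht := h.detZ_nonneg
    have hv := h.ne_zero
    simp only [detZ, hv1'.1] at ht
    rcases lt_trichotomy v.2 0 with h2 | h2 | h2
    · nlinarith
    · exact absurd (Prod.ext hv1'.1 h2) hv
    · exact h2
  rcases h.boundary _ (htop (A.1 - 1) (by omega) (by omega)) with h' | h'
  · rw [hf] at h'; nlinarith
  · rw [hg, hv1'.1, hv1'.2] at h'; linarith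

theorem detZ_le_of_fst_pos (h : BoundaryFreeConfig m n A u C v) (hu1 : 0 < u.1) (hu2 : 0 ≤ u.2)
    (hQ : Q ∈ Grid m n) (hQC : 0 ≤ detZ v (Q - C)) : detZ u (Q - A) ≤ max |u.1| |u.2| := by
  obtain ⟨hA1, hA2, hA3, hA4⟩ := mem_grid_sdiff_gridBoundary.1 h.mem_A
  obtain ⟨hC1, hC2, hC3, hC4⟩ := mem_grid_sdiff_gridBoundary.1 h.mem_C
  obtain ⟨hQ1, -, hQ3, -⟩ := hQ
  have hv1 := h.v_fst_neg hu1 hu2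
  by_contra! hq
  have hcone : ∀ P ∈ GridBoundary m n, 0 < detZ u (P - A) →
      detZ u (P - A) ≤ max |u.1| |u.2| → detZ u (P - Q) < 0 ∧ detZ v (P - Q) ≤ 0 := by
    intro P hP hpos hle
    have hgP : detZ v (P - C) ≤ 0 := (h.boundary P hP).resolve_left (not_le.2 hpos)
    constructor
    · rw [show P - Q = (P - A) - (Q - A) by abel, detZ_sub_right]; linarith
    · rw [show P - Q = (P - C) - (Q - C) by abel, detZ_sub_right]; linarith
  rcases le_or_gt (detZ u (0 - A)) 0 with h00 | h00
  · obtain ⟨j, ⟨hj0, hjn⟩, hpos, hle⟩ := exists_add_mul_mem_Ioc (L := n - 1) hu1 h00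
      (by simp only [detZ, Prod.fst_sub, Prod.snd_sub, Prod.fst_zero, Prod.snd_zero]; nlinarith)
    have hP : ((0 : ℤ), j) ∈ GridBoundary m n := by simp [GridBoundary, Grid]; omega
    have hfP : detZ u ((0, j) - A) = detZ u (0 - A) + u.1 * j := by
      simp only [detZ, Prod.fst_sub, Prod.snd_sub, Prod.fst_zero, Prod.snd_zero]; ring
    obtain ⟨h1, h2⟩ := hcone _ hP (hfP ▸ hpos)
      (hfP ▸ hle.trans (le_abs_self _) |>.trans (le_max_left _ _))
    have := fst_pos_of_detZ hu1.le hv1 h.detZ_nonneg h1 h2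
    simp only [Prod.fst_sub] at this; omega
  · have hu2' : 0 < u.2 := by
      simp only [detZ, Prod.fst_sub, Prod.snd_sub, Prod.fst_zero, Prod.snd_zero] at h00; nlinarith
    rcases le_or_gt 0 v.2 with hv2 | hv2
    · -- the corner `(0, 0)` lies in both open half-planes
      have hP : ((0 : ℤ), (0 : ℤ)) ∈ GridBoundary m n := by simp [GridBoundary, Grid]; omega
      rcases h.boundary _ hP with h' | h'
      · exact absurd h00 (not_lt.2 h')
      · simp only [detZ, Prod.fst_sub, Prod.snd_sub] at h'
        nlinarith [mul_pos (neg_pos.2 hv1) (show (0 : ℤ) < C.2 by omega),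
          mul_nonneg hv2 (show (0 : ℤ) ≤ C.1 by omega)]
    · obtain ⟨j, ⟨hj0, hjm⟩, hpos, hle⟩ :=
        exists_add_mul_mem_Ioc (a := detZ u (((m : ℤ) - 1, 0) - A)) (L := m - 1) hu2'
          (by simp only [detZ, Prod.fst_sub, Prod.snd_sub]; nlinarith)
          (by simp only [detZ, Prod.fst_sub, Prod.snd_sub, Prod.fst_zero, Prod.snd_zero] at h00 ⊢
              nlinarith)
      have hP : ((m : ℤ) - 1 - j, (0 : ℤ)) ∈ GridBoundary m n := by
        simp [GridBoundary, Grid]; omega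
      have hfP :
          detZ u (((m : ℤ) - 1 - j, 0) - A) = detZ u (((m : ℤ) - 1, 0) - A) + u.2 * j := by
        simp only [detZ, Prod.fst_sub, Prod.snd_sub]; ring
      obtain ⟨h1, h2⟩ := hcone _ hP (hfP ▸ hpos)
        (hfP ▸ hle.trans (le_abs_self _) |>.trans (le_max_right _ _))
      have := snd_pos_of_detZ hu2 hv2 h.detZ_nonneg h1 h2
      simp only [Prod.snd_sub] at this; omega

theorem detZ_le (h : BoundaryFreeConfig m n A u C v) (hQ : Q ∈ Grid m n)
    (hQC : 0 ≤ detZ v (Q - C)) : detZ u (Q - A) ≤ max |u.1| |u.2| := by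
  rcases eq_or_ne u 0 with rfl | hu
  · simp [detZ]
  have hquad : (0 < u.1 ∧ 0 ≤ u.2) ∨ (u.1 ≤ 0 ∧ 0 < u.2) ∨ (u.1 < 0 ∧ u.2 ≤ 0) ∨
      (0 ≤ u.1 ∧ u.2 < 0) := by
    have : u.1 ≠ 0 ∨ u.2 ≠ 0 := by contrapose! hu; exact Prod.ext hu.1 hu.2
    omega
  rcases hquad with ⟨h1, h2⟩ | ⟨h1, h2⟩ | ⟨h1, h2⟩ | ⟨h1, h2⟩
  · exact h.detZ_le_of_fst_pos h1 h2 hQ hQC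
  · simpa using h.rotate.detZ_le_of_fst_pos (Q := gridRot m Q) (by simpa [vecRot])
      (by simpa [vecRot]) (by simpa) (by simpa)
  · simpa using h.rotate.rotate.detZ_le_of_fst_pos (Q := gridRot n (gridRot m Q))
      (by simpa [vecRot]) (by simpa [vecRot]) (by simpa) (by simpa)
  · simpa using h.rotate.rotate.rotate.detZ_le_of_fst_pos
      (Q := gridRot m (gridRot n (gridRot m Q))) (by simpa [vecRot]) (by simpa [vecRot])
      (by simpa) (by simpa)

end BoundaryFreeConfig

section ProperPairs

variable {m n : ℕ} {A B C D X : ℤ × ℤ}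

theorem SegTrue.detZ_nonneg (h : SegTrue A B X) : 0 ≤ detZ (B - A) (X - A) := by
  rcases h with ⟨h, _⟩ | h <;> omega

theorem segTrue_self (h : A ≠ B) : SegTrue A B A := by
  have : A.1 - B.1 ≠ 0 ∨ A.2 - B.2 ≠ 0 := by
    contrapose! h; exact Prod.ext (by omega) (by omega)
  refine Or.inl ⟨by simp [detZ], ?_⟩
  simp only [sub_self]
  rcases this with h | h <;> positivity

theorem PrimeSeg.ne (h : PrimeSeg A B) : A ≠ B := by
  rintro rfl; simp [PrimeSeg] at h

theorem ProperPair.symm (h : ProperPair m n A B C D) : ProperPair m n C D A B := by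
  obtain ⟨hA, hB, hC, hD, hAB, hCD, h1, h2, h3, h4⟩ := h
  exact ⟨hC, hD, hA, hB, hCD, hAB, h3, h4, h1, h2⟩

theorem ProperPair.boundaryFreeConfig (hP : ProperPair m n A B C D)
    (hN : ∀ X ∈ Grid m n, SegTrue A B X → SegTrue C D X → X ∉ GridBoundary m n)
    (ht : 0 ≤ detZ (B - A) (D - C)) : BoundaryFreeConfig m n A (B - A) C (D - C) := by
  obtain ⟨hA, -, hC, -, hAB, hCD, hCDA, -, hABC, -⟩ := hP
  refine ⟨⟨hA, hN A hA (segTrue_self hAB.ne) hCDA⟩, ⟨hC, hN C hC hABC (segTrue_self hCD.ne)⟩,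
    sub_ne_zero.2 hCD.ne.symm, ht, hCDA.detZ_nonneg, fun X hX => ?_⟩
  by_contra! h
  exact hN X hX.1 (Or.inr h.1) (Or.inr h.2) hX

end ProperPairs

noncomputable def gridFinset (m n : ℕ) : Finset (ℤ × ℤ) := Ico 0 (m : ℤ) ×ˢ Ico 0 (n : ℤ)

noncomputable def band (m n : ℕ) (A u : ℤ × ℤ) : Finset (ℤ × ℤ) :=
  {X ∈ gridFinset m n | 0 ≤ detZ u (X - A) ∧ detZ u (X - A) ≤ max |u.1| |u.2|}

section Counting

variable {m n : ℕ} {A u X Y : ℤ × ℤ}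

@[simp] theorem mem_gridFinset : X ∈ gridFinset m n ↔ X ∈ Grid m n := by
  simp [gridFinset, Grid, and_assoc]

theorem card_gridFinset (m n : ℕ) : #(gridFinset m n) = m * n := by
  simp [gridFinset]

theorem mem_band : X ∈ band m n A u ↔
    X ∈ Grid m n ∧ 0 ≤ detZ u (X - A) ∧ detZ u (X - A) ≤ max |u.1| |u.2| := by
  simp [band]

theorem eq_zero_of_abs_mul_le {c d : ℤ} (hc : c ≠ 0) (h : |c * d| ≤ |c|) (hd : 2 ∣ d) :
    d = 0 := by
  rw [abs_mul] at h
  have : |d| ≤ 1 := le_of_mul_le_mul_left (by simpa using h) (abs_pos.2 hc)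
  rw [abs_le] at this
  omega

theorem abs_detZ_sub_le (hX : X ∈ band m n A u) (hY : Y ∈ band m n A u) :
    |detZ u (X - Y)| ≤ max |u.1| |u.2| := by
  rw [mem_band] at hX hY
  rw [show X - Y = (X - A) - (Y - A) by abel, detZ_sub_right, abs_le]
  constructor <;> linarith

theorem card_band_le_of_abs_le (hu : u.2 ≠ 0) (h : |u.1| ≤ |u.2|) : #(band m n A u) ≤ 2 * n := by
  -- a point of the band is determined by its row and the parity of its column
  calc #(band m n A u) ≤ #(Ico (0 : ℤ) n ×ˢ Ico (0 : ℤ) 2) := by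
        refine card_le_card_of_injOn (fun X => (X.2, X.1 % 2)) (fun X hX => ?_) ?_
        · have := (mem_band.1 hX).1
          simp only [Grid, Set.mem_ofPred_eq] at this
          simp only [coe_product, coe_Ico, Set.mem_prod, Set.mem_Ico]; omega
        · intro X hX Y hY hXY
          simp only [Prod.mk.injEq] at hXY
          have hdet : detZ u (X - Y) = -(u.2 * (X.1 - Y.1)) := by
            simp only [detZ, Prod.fst_sub, Prod.snd_sub, hXY.1]; ring
          have := abs_detZ_sub_le hX hY
          rw [hdet, abs_neg, max_eq_right h] at this
          have := eq_zero_of_abs_mul_le hu this (by omega)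
          exact Prod.ext (by omega) hXY.1
    _ = 2 * n := by simp [mul_comm]

theorem map_swap_band :
    (band m n A u).map (Equiv.prodComm ℤ ℤ).toEmbedding = band n m A.swap (-u.swap) := by
  ext X
  simp only [mem_map_equiv, mem_band, Equiv.prodComm_symm, Equiv.prodComm_apply]
  simp only [Grid, Set.mem_ofPred_eq, detZ, Prod.fst_swap, Prod.snd_swap, Prod.fst_sub,
    Prod.snd_sub, Prod.fst_neg, Prod.snd_neg, abs_neg, max_comm |u.2|]
  constructor <;> rintro ⟨h1, h2, h3⟩ <;> refine ⟨by omega, by linarith, by linarith⟩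

theorem card_band_le (hu : u ≠ 0) : #(band m n A u) ≤ 2 * (m + n) := by
  rcases le_total |u.1| |u.2| with h | h
  · have hu2 : u.2 ≠ 0 := by
      intro h2; apply hu; ext <;> simp_all
    linarith [card_band_le_of_abs_le (m := m) (n := n) (A := A) hu2 h]
  · have hu1 : u.1 ≠ 0 := by
      intro h1; apply hu; ext <;> simp_all
    rw [← card_map (Equiv.prodComm ℤ ℤ).toEmbedding, map_swap_band]
    linarith [card_band_le_of_abs_le (m := n) (n := m) (A := A.swap) (u := -u.swap)
      (by simpa using hu1) (by simpa using h)]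

end Counting

noncomputable def bandQuadruples (m n : ℕ) :
    Finset (((ℤ × ℤ) × (ℤ × ℤ)) × ((ℤ × ℤ) × (ℤ × ℤ))) :=
  {p ∈ gridFinset m n ×ˢ gridFinset m n | p.1 ≠ p.2}.biUnion fun p =>
    {p} ×ˢ (band m n p.1 (p.2 - p.1) ×ˢ band m n p.1 (p.2 - p.1))

theorem card_bandQuadruples_le (m n : ℕ) :
    #(bandQuadruples m n) ≤ (m * n) * (m * n) * (2 * (m + n)) ^ 2 := by
  unfold bandQuadruples
  refine (card_biUnion_le_card_mul _ _ ((2 * (m + n)) ^ 2) fun p hp => ?_).trans ?_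
  · have hu : p.2 - p.1 ≠ 0 := sub_ne_zero.2 (mem_filter.1 hp).2.symm
    rw [card_product, card_product, card_singleton, one_mul, sq]
    exact Nat.mul_le_mul (card_band_le hu) (card_band_le hu)
  · gcongr
    exact (card_filter_le _ _).trans_eq (by rw [card_product, card_gridFinset])

theorem ProperPair.mem_bandQuadruples {m n : ℕ} {A B C D : ℤ × ℤ} (hP : ProperPair m n A B C D)
    (hN : ∀ X ∈ Grid m n, SegTrue A B X → SegTrue C D X → X ∉ GridBoundary m n)
    (ht : 0 ≤ detZ (B - A) (D - C)) : ((A, B), (C, D)) ∈ bandQuadruples m n := by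
  have h := hP.boundaryFreeConfig hN ht
  obtain ⟨hA, hB, hC, hD, hAB, -, -, -, hABC, hABD⟩ := hP
  refine mem_biUnion.2 ⟨(A, B), by simp [hA, hB, hAB.ne], ?_⟩
  simp only [mem_product, mem_singleton, true_and, mem_band]
  exact ⟨⟨hC, hABC.detZ_nonneg, h.detZ_le hC (by simp [detZ])⟩,
    ⟨hD, hABD.detZ_nonneg, h.detZ_le hD (by simp [detZ_self])⟩⟩

theorem ncard_properPairs_no_boundary_true_le (m n : ℕ) :
    {z : Sym2 ((ℤ × ℤ) × (ℤ × ℤ)) | ∃ A B C D : ℤ × ℤ,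
        z = s((A, B), (C, D)) ∧ ProperPair m n A B C D ∧
        ∀ X ∈ Grid m n, SegTrue A B X → SegTrue C D X → X ∉ GridBoundary m n}.ncard
      ≤ (m * n) * (m * n) * (2 * (m + n)) ^ 2 := by
  refine (Set.ncard_le_ncard (t := ↑((bandQuadruples m n).image fun x => s(x.1, x.2))) ?_
    (Set.toFinite _)).trans ?_
  · rintro _ ⟨A, B, C, D, rfl, hP, hN⟩
    rcases le_total 0 (detZ (B - A) (D - C)) with ht | ht
    · exact mem_image_of_mem _ (hP.mem_bandQuadruples hN ht)
    · refine mem_image.2 ⟨_, hP.symm.mem_bandQuadruples (fun X hX h1 h2 => hN X hX h2 h1) ?_,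
        Sym2.eq_swap⟩
      simp only [detZ] at ht ⊢; linarith
  · rw [Set.ncard_coe_finset]
    exact card_image_le.trans (card_bandQuadruples_le m n)

/-- the number of proper pairs of oriented segments whose conjunction has no
true points on the boundary of the grid is O(m²n²(m+n)²). -/
theorem count_proper_pairs_no_boundary_true :
    ∃ K : ℝ, ∀ m n : ℕ, 2 ≤ m → 2 ≤ n →
      (({z : Sym2 ((ℤ × ℤ) × (ℤ × ℤ)) | ∃ A B C D : ℤ × ℤ,
          z = s((A, B), (C, D)) ∧ ProperPair m n A B C D ∧
          ∀ X ∈ Grid m n, SegTrue A B X → SegTrue C D X → X ∉ GridBoundary m n}).ncard : ℝ)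
        ≤ K * (m : ℝ) ^ 2 * (n : ℝ) ^ 2 * ((m : ℝ) + (n : ℝ)) ^ 2 := by
  refine ⟨4, fun m n _ _ => ?_⟩
  calc _ ≤ (((m * n) * (m * n) * (2 * (m + n)) ^ 2 : ℕ) : ℝ) := by
        exact_mod_cast ncard_properPairs_no_boundary_true_le m n
    _ = 4 * (m : ℝ) ^ 2 * (n : ℝ) ^ 2 * ((m : ℝ) + (n : ℝ)) ^ 2 := by push_cast; ring
end

section
/- There is an absolute constant K such that for all positive integers u, v, |Z₂ᵃ(u,v)| ≤ K·(u²v + uv²). -/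
open scoped Real

/-!
A pair in `Z₂ᵃ(u,v)` is one of the three ways of splitting its four endpoints into two segments.
Two endpoints `X`, `Y` are corners of `ℛ_{u,v}` (at most 4 choices each). Since `XY` is a side of
`ℛ_{u,v}`, the bounding box forces another endpoint `W` onto the opposite side, so `W` is one of the
`O(u + v)` boundary points, and the last endpoint is one of the `(u + 1)(v + 1)` points of the
rectangle. Hence `|Z₂ᵃ(u,v)| = O((u + v) u v)`.
-/

section Pairings

variable {α : Type*} [DecidableEq α]

def pairings (P Q R S : α) : Finset (Sym2 (Sym2 α)) :=
  {s(s(P, Q), s(R, S)), s(s(P, R), s(Q, S)), s(s(P, S), s(Q, R))}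

theorem card_pairings_le (P Q R S : α) : (pairings P Q R S).card ≤ 3 :=
  Finset.card_le_three

theorem exists_mem_pairings {A B C D X Y W : α}
    (hX : X ∈ ({A, B, C, D} : Set α)) (hY : Y ∈ ({A, B, C, D} : Set α))
    (hW : W ∈ ({A, B, C, D} : Set α)) (hXY : X ≠ Y) (hXW : X ≠ W) (hYW : Y ≠ W) :
    ∃ g ∈ ({A, B, C, D} : Set α), s(s(A, B), s(C, D)) ∈ pairings X Y W g := by
  simp only [Set.mem_insert_iff, Set.mem_singleton_iff] at hX hY hW
  rcases hX with rfl | rfl | rfl | rfl <;> rcases hY with rfl | rfl | rfl | rfl <;>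
    rcases hW with rfl | rfl | rfl | rfl <;>
    first
      | exact absurd rfl hXY
      | exact absurd rfl hXW
      | exact absurd rfl hYW
      | exact ⟨A, by simp, by simp [pairings, Sym2.eq_swap]⟩
      | exact ⟨B, by simp, by simp [pairings, Sym2.eq_swap]⟩
      | exact ⟨C, by simp, by simp [pairings, Sym2.eq_swap]⟩
      | exact ⟨D, by simp, by simp [pairings, Sym2.eq_swap]⟩

end Pairings

section BoundingBox

variable {α β : Type*} [LinearOrder β] {A B C D : α} {f : α → β} {a m : β}

theorem exists_mem_of_max_eq (h : max (max (f A) (f B)) (max (f C) (f D)) = m) :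
    ∃ W ∈ ({A, B, C, D} : Set α), f W = m := by
  simp only [Set.mem_insert_iff, Set.mem_singleton_iff, exists_eq_or_imp, exists_eq_left]
  rcases max_choice (f A) (f B) with hAB | hAB <;>
    rcases max_choice (f C) (f D) with hCD | hCD <;>
    rcases max_choice (max (f A) (f B)) (max (f C) (f D)) with h' | h' <;> simp_all

theorem exists_mem_of_min_eq (h : min (min (f A) (f B)) (min (f C) (f D)) = m) :
    ∃ W ∈ ({A, B, C, D} : Set α), f W = m :=
  exists_mem_of_max_eq (β := βᵒᵈ) h

theorem mem_Icc_of_min_max_eq [LocallyFiniteOrder β]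
    (hmin : min (min (f A) (f B)) (min (f C) (f D)) = a)
    (hmax : max (max (f A) (f B)) (max (f C) (f D)) = m) :
    ∀ P ∈ ({A, B, C, D} : Set α), f P ∈ Finset.Icc a m := by
  subst hmin hmax
  simp only [Set.mem_insert_iff, Set.mem_singleton_iff, Finset.mem_Icc]
  rintro P (rfl | rfl | rfl | rfl) <;> simp

theorem exists_mem_extreme_ne {X Y : α} (ham : a < m)
    (hmin : min (min (f A) (f B)) (min (f C) (f D)) = a)
    (hmax : max (max (f A) (f B)) (max (f C) (f D)) = m)
    (hXY : f X = f Y) (hX : f X = a ∨ f X = m) :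
    ∃ W ∈ ({A, B, C, D} : Set α), (f W = a ∨ f W = m) ∧ X ≠ W ∧ Y ≠ W := by
  rcases hX with hX | hX
  · obtain ⟨W, hW, hfW⟩ := exists_mem_of_max_eq hmax
    refine ⟨W, hW, Or.inr hfW, ne_of_apply_ne f ?_, ne_of_apply_ne f ?_⟩ <;>
      simp [← hXY, hX, hfW, ham.ne]
  · obtain ⟨W, hW, hfW⟩ := exists_mem_of_min_eq hmin
    refine ⟨W, hW, Or.inl hfW, ne_of_apply_ne f ?_, ne_of_apply_ne f ?_⟩ <;>
      simp [← hXY, hX, hfW, ham.ne']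

end BoundingBox

section Rectangle

variable {u v : ℕ}

noncomputable def rectPoints (u v : ℕ) : Finset (ℤ × ℤ) :=
  Finset.Icc 0 (u : ℤ) ×ˢ Finset.Icc 0 (v : ℤ)

def rectCorners (u v : ℕ) : Finset (ℤ × ℤ) := {0, (u : ℤ)} ×ˢ {0, (v : ℤ)}

noncomputable def rectBoundary (u v : ℕ) : Finset (ℤ × ℤ) :=
  ({0, (u : ℤ)} ×ˢ Finset.Icc 0 (v : ℤ)) ∪ (Finset.Icc 0 (u : ℤ) ×ˢ {0, (v : ℤ)})

theorem card_Icc_zero_natCast (n : ℕ) : (Finset.Icc 0 (n : ℤ)).card = n + 1 := by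
  simp

theorem card_rectPoints : (rectPoints u v).card = (u + 1) * (v + 1) := by
  rw [rectPoints, Finset.card_product, card_Icc_zero_natCast, card_Icc_zero_natCast]

theorem card_rectCorners_le : (rectCorners u v).card ≤ 4 := by
  rw [rectCorners, Finset.card_product]
  exact Nat.mul_le_mul Finset.card_le_two Finset.card_le_two

theorem card_rectBoundary_le : (rectBoundary u v).card ≤ 2 * (v + 1) + 2 * (u + 1) := by
  refine (Finset.card_union_le _ _).trans ?_
  rw [Finset.card_product, Finset.card_product, card_Icc_zero_natCast, card_Icc_zero_natCast,
    mul_comm (u + 1)]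
  exact add_le_add (Nat.mul_le_mul_right _ Finset.card_le_two)
    (Nat.mul_le_mul_right _ Finset.card_le_two)

theorem mem_rectCorners {P : ℤ × ℤ} (hP : RectCorner u v P) : P ∈ rectCorners u v := by
  simpa [rectCorners, RectCorner] using hP

theorem mem_rectBoundary {P : ℤ × ℤ} (hP : P ∈ rectPoints u v)
    (hside : P.1 = 0 ∨ P.1 = u ∨ P.2 = 0 ∨ P.2 = v) : P ∈ rectBoundary u v := by
  simp only [rectPoints, rectBoundary, Finset.mem_union, Finset.mem_product, Finset.mem_Icc,
    Finset.mem_insert, Finset.mem_singleton] at hP ⊢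
  omega

variable {A B C D : ℤ × ℤ}

theorem InBBox.mem_rectPoints (h : InBBox u v A B C D) :
    ∀ P ∈ ({A, B, C, D} : Set (ℤ × ℤ)), P ∈ rectPoints u v := fun P hP =>
  Finset.mem_product.2
    ⟨mem_Icc_of_min_max_eq h.1 h.2.1 P hP, mem_Icc_of_min_max_eq h.2.2.1 h.2.2.2 P hP⟩

theorem InBBox.exists_mem_rectBoundary_ne (h : InBBox u v A B C D) (hu : 0 < u) (hv : 0 < v)
    {X Y : ℤ × ℤ} (hX : RectCorner u v X) (hXY : X.1 = Y.1 ∨ X.2 = Y.2) :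
    ∃ W ∈ ({A, B, C, D} : Set (ℤ × ℤ)), W ∈ rectBoundary u v ∧ X ≠ W ∧ Y ≠ W := by
  rcases hXY with hXY | hXY
  · obtain ⟨W, hW, hside, hXW, hYW⟩ :=
      exists_mem_extreme_ne (Int.natCast_pos.2 hu) h.1 h.2.1 hXY hX.1
    exact ⟨W, hW, mem_rectBoundary (h.mem_rectPoints W hW) (by omega), hXW, hYW⟩
  · obtain ⟨W, hW, hside, hXW, hYW⟩ :=
      exists_mem_extreme_ne (Int.natCast_pos.2 hv) h.2.2.1 h.2.2.2 hXY hX.2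
    exact ⟨W, hW, mem_rectBoundary (h.mem_rectPoints W hW) (by omega), hXW, hYW⟩

end Rectangle

noncomputable def z2aCandidates (u v : ℕ) : Finset (Sym2 (Sym2 (ℤ × ℤ))) :=
  (rectCorners u v ×ˢ rectCorners u v ×ˢ rectBoundary u v ×ˢ rectPoints u v).biUnion
    fun t => pairings t.1 t.2.1 t.2.2.1 t.2.2.2

theorem card_z2aCandidates_le (u v : ℕ) :
    (z2aCandidates u v).card ≤ 96 * ((u + v + 2) * ((u + 1) * (v + 1))) := by
  refine (Finset.card_biUnion_le_card_mul _ _ 3 fun t _ => card_pairings_le _ _ _ _).trans ?_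
  simp only [Finset.card_product, card_rectPoints]
  calc _ ≤ 4 * (4 * ((2 * (v + 1) + 2 * (u + 1)) * ((u + 1) * (v + 1)))) * 3 := by
        gcongr
        exacts [card_rectCorners_le, card_rectCorners_le, card_rectBoundary_le]
    _ = _ := by ring

theorem Z2a_subset_z2aCandidates {u v : ℕ} (hu : 0 < u) (hv : 0 < v) :
    Z2a u v ⊆ z2aCandidates u v := by
  rintro z ⟨A, B, C, D, rfl, ⟨-, -, -, hbox⟩, -, X, Y, hX, hY, hXY, hXc, hYc, hadj⟩
  obtain ⟨W, hW, hWbd, hXW, hYW⟩ := hbox.exists_mem_rectBoundary_ne hu hv hXc hadj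
  obtain ⟨g, hg, hz⟩ := exists_mem_pairings hX hY hW hXY hXW hYW
  refine Finset.mem_biUnion.2 ⟨(X, Y, W, g), ?_, hz⟩
  simp only [Finset.mem_product]
  exact ⟨mem_rectCorners hXc, mem_rectCorners hYc, hWbd, hbox.mem_rectPoints g hg⟩

/-- |Z₂ᵃ(u,v)| ≤ K·(u²v + uv²). -/
theorem Z2a_bound :
    ∃ K : ℝ, ∀ u v : ℕ, 0 < u → 0 < v →
      ((Z2a u v).ncard : ℝ) ≤ K * ((u : ℝ) ^ 2 * (v : ℝ) + (u : ℝ) * (v : ℝ) ^ 2) := by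
  refine ⟨768, fun u v hu hv => ?_⟩
  have hcard : (Z2a u v).ncard ≤ 768 * (u ^ 2 * v + u * v ^ 2) := calc
    (Z2a u v).ncard ≤ (z2aCandidates u v).card := by
      rw [← Set.ncard_coe_finset]
      exact Set.ncard_le_ncard (Z2a_subset_z2aCandidates hu hv) (Finset.finite_toSet _)
    _ ≤ 96 * ((u + v + 2) * ((u + 1) * (v + 1))) := card_z2aCandidates_le u v
    _ ≤ 96 * ((2 * (u + v)) * ((2 * u) * (2 * v))) := by gcongr <;> omega
    _ = 768 * (u ^ 2 * v + u * v ^ 2) := by ring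
  exact_mod_cast hcard
end

section
/- Let A, B, C, D be points in the plane ℝ² with A ≠ B and C ≠ D. The segments AB and CD are in convex position if and only if the points A, B, C, D are in general position (no three of them are collinear), det(B−A, C−A) and det(B−A, D−A) have the same (nonzero) sign, and det(D−C, A−C) and det(D−C, B−C) have the same (nonzero) sign (i.e., the triangle ABD has the same orientation as ABC, and the triangle CDA has the same orientation as CDB). -/
open scoped Real

/-!
Every turn of the polygon `A B C D` is the orientation of a triangle on three of the four
points: the turns of `A B C D` are `ABC, BCD, ACD, ABD`, and those of `A B D C` are the same
with `BCD` and `ACD` reversed. So one of the two quadrilaterals is convex exactly when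
`ABC, ABD` agree in sign and `ACD, BCD` agree in sign, the two pairs agreeing or disagreeing
according to which of the two cyclic orders is the convex one.
-/

def orient (P Q R : ℝ × ℝ) : ℝ := detR (Q - P) (R - P)

lemma detR_sub_sub_eq_orient (P Q R : ℝ × ℝ) : detR (Q - P) (R - Q) = orient P Q R := by
  simp only [orient, detR, Prod.fst_sub, Prod.snd_sub]
  ring

lemma orient_rotate (P Q R : ℝ × ℝ) : orient Q R P = orient P Q R := by
  simp only [orient, detR, Prod.fst_sub, Prod.snd_sub]
  ring

lemma orient_swap (P Q R : ℝ × ℝ) : orient P R Q = -orient P Q R := by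
  simp only [orient, detR, Prod.fst_sub, Prod.snd_sub]
  ring

def AllSameSign {α : Type*} [Zero α] [LT α] (a b c d : α) : Prop :=
  (0 < a ∧ 0 < b ∧ 0 < c ∧ 0 < d) ∨ (a < 0 ∧ b < 0 ∧ c < 0 ∧ d < 0)

lemma allSameSign_or_allSameSign_neg_iff {α : Type*} [Ring α] [LinearOrder α]
    [IsStrictOrderedRing α] (p q r s : α) :
    AllSameSign p s r q ∨ AllSameSign q (-s) (-r) p ↔
      (p ≠ 0 ∧ q ≠ 0 ∧ r ≠ 0 ∧ s ≠ 0) ∧ 0 < p * q ∧ 0 < r * s := by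
  simp only [AllSameSign, mul_pos_iff, neg_pos, neg_lt_zero]
  constructor
  · rintro ((h | h) | (h | h)) <;> refine ⟨⟨?_, ?_, ?_, ?_⟩, ?_, ?_⟩ <;> grind
  · rintro ⟨-, hpq | hpq, hrs | hrs⟩ <;> grind

lemma quadConvR_iff_allSameSign (A B C D : ℝ × ℝ) :
    QuadConvR A B C D ↔
      AllSameSign (orient A B C) (orient B C D) (orient A C D) (orient A B D) := by
  rw [QuadConvR, AllSameSign]
  simp only [detR_sub_sub_eq_orient]
  rw [orient_rotate A C D, orient_rotate B D A, orient_rotate A B D]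

theorem convexPos_iff_orientations_general (A B C D : ℝ × ℝ) :
    ConvexPosR A B C D ↔
      (detR (B - A) (C - A) ≠ 0 ∧ detR (B - A) (D - A) ≠ 0 ∧
        detR (C - A) (D - A) ≠ 0 ∧ detR (C - B) (D - B) ≠ 0) ∧
      0 < detR (B - A) (C - A) * detR (B - A) (D - A) ∧
      0 < detR (D - C) (A - C) * detR (D - C) (B - C) := by
  have hCDA : detR (D - C) (A - C) = orient A C D := orient_rotate A C D
  have hCDB : detR (D - C) (B - C) = orient B C D := orient_rotate B C D
  rw [ConvexPosR, quadConvR_iff_allSameSign, quadConvR_iff_allSameSign, orient_swap B C D,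
    orient_swap A C D, hCDA, hCDB]
  exact allSameSign_or_allSameSign_neg_iff _ _ _ _

/-- AB and CD are in convex position iff A, B, C, D are in general position,
the triangles ABC and ABD have the same orientation, and CDA and CDB have the same
orientation. -/
theorem convexPos_iff_orientations (A B C D : ℝ × ℝ) (hAB : A ≠ B) (hCD : C ≠ D) :
    ConvexPosR A B C D ↔
      (detR (B - A) (C - A) ≠ 0 ∧ detR (B - A) (D - A) ≠ 0 ∧
        detR (C - A) (D - A) ≠ 0 ∧ detR (C - B) (D - B) ≠ 0) ∧
      0 < detR (B - A) (C - A) * detR (B - A) (D - A) ∧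
      0 < detR (D - C) (A - C) * detR (D - C) (B - C) :=
  convexPos_iff_orientations_general A B C D
end
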